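/- Let A and B be pseudo-curves in Ω with A < B. Then the band between A and B, E_AB, is a band; that is, E_AB is a strip and (E_AB)^c = E_AB. -/
import Mathlib


open Dynamics Set

noncomputable section

/-- The circle `S¹ = ℝ/ℤ`. -/
abbrev S1 : Type := AddCircle (1 : ℝ)

/-- The unit interval `I = [0,1]` as a type. -/
abbrev II : Type := Set.Icc (0 : ℝ) 1

/-- The cylinder `Ω = S¹ × I`. -/
abbrev Cyl : Type := S1 × II

/-- The fiber of a subset of the cylinder over `θ ∈ S¹`. -/
def fiber (A : Set Cyl) (θ : S1) : Set II := {x : II | (θ, x) ∈ A}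

/-- `M_A θ = max {x ∈ I : (θ, x) ∈ A}`. -/
def MA (A : Set Cyl) (θ : S1) : ℝ := sSup (Subtype.val '' fiber A θ)

/-- `m_A θ = min {x ∈ I : (θ, x) ∈ A}`. -/
def mA (A : Set Cyl) (θ : S1) : ℝ := sInf (Subtype.val '' fiber A θ)

/-- A strip: a closed set projecting onto all of `S¹` whose fibers over a residual
set of `θ`'s are (possibly degenerate) nonempty closed intervals. -/
def IsStrip (A : Set Cyl) : Prop :=
  IsClosed A ∧ (∀ θ : S1, ∃ x : II, (θ, x) ∈ A) ∧
    ∃ G ∈ residual S1, ∀ θ ∈ G, ∃ a b : II, a ≤ b ∧ fiber A θ = Set.Icc a b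

/-- `A < B` for strips. -/
def stripLT (A B : Set Cyl) : Prop := ∃ G ∈ residual S1, ∀ θ ∈ G, MA A θ < mA B θ

/-- `A ≤ B` for strips. -/
def stripLE (A B : Set Cyl) : Prop := ∃ G ∈ residual S1, ∀ θ ∈ G, MA A θ ≤ mA B θ

/-- Two strips are ordered if `A < B` or `B < A`. -/
def StripOrdered (A B : Set Cyl) : Prop := stripLT A B ∨ stripLT B A

/-- Two strips are weakly ordered if `A ≤ B` or `B ≤ A`. -/
def StripWeaklyOrdered (A B : Set Cyl) : Prop := stripLE A B ∨ stripLE B A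

/-- The class `S(Ω)` of quasiperiodically forced skew-products on the cylinder:
continuous maps whose first coordinate is an irrational rotation. -/
def IsQPF (F : Cyl → Cyl) : Prop :=
  Continuous F ∧ ∃ ω : ℝ, Irrational ω ∧ ∀ p : Cyl, (F p).1 = p.1 + (ω : S1)

/-- `B` is an `n`-periodic strip of `F`: `F^n(B) = B` and the iterates
`B, F(B), …, F^{n-1}(B)` are pairwise disjoint and pairwise ordered. -/
def IsPeriodicStripOrbit (F : Cyl → Cyl) (n : ℕ) (B : Set Cyl) : Prop :=
  IsStrip B ∧ F^[n] '' B = B ∧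
    ∀ i j : ℕ, i < j → j < n →
      Disjoint (F^[i] '' B) (F^[j] '' B) ∧ StripOrdered (F^[i] '' B) (F^[j] '' B)

/-- A cyclic permutation: the (forward) orbit of any point is everything. -/
def IsCyclicPerm {n : ℕ} (τ : Equiv.Perm (Fin n)) : Prop :=
  ∀ i j : Fin n, ∃ k : ℕ, (τ ^ k) i = j

/-- `F` exhibits the strips pattern `τ`: it has a periodic orbit of strips,
spatially labelled, moved around according to `τ`. -/
def ExhibitsStripPattern (F : Cyl → Cyl) {n : ℕ} (τ : Equiv.Perm (Fin n)) : Prop :=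
  ∃ B : Fin n → Set Cyl,
    (∀ i, IsStrip (B i)) ∧
    (∀ i j : Fin n, i < j → stripLT (B i) (B j)) ∧
    (Pairwise fun i j => Disjoint (B i) (B j)) ∧
    (∀ i, F '' B i = B (τ i))

/-- A continuous interval map has a periodic orbit with interval pattern `τ`. -/
def HasIntervalPattern (f : II → II) {n : ℕ} (τ : Equiv.Perm (Fin n)) : Prop :=
  ∃ p : Fin n → II, StrictMono p ∧ ∀ i, f (p i) = p (τ i)

/-- `τ` forces `ν` as interval patterns. -/
def ForcesI {n m : ℕ} (τ : Equiv.Perm (Fin n)) (ν : Equiv.Perm (Fin m)) : Prop :=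
  ∀ f : II → II, Continuous f → HasIntervalPattern f τ → HasIntervalPattern f ν

/-- `τ` forces `ν` in `Ω`. -/
def ForcesOmega {n m : ℕ} (τ : Equiv.Perm (Fin n)) (ν : Equiv.Perm (Fin m)) : Prop :=
  ∀ F : Cyl → Cyl, IsQPF F → ExhibitsStripPattern F τ → ExhibitsStripPattern F ν

/-- `p >_Sh q` in the Sharkovskiĭ ordering. -/
def SharkGT (p q : ℕ) : Prop :=
  ∃ i m j l : ℕ, Odd m ∧ Odd l ∧ p = 2 ^ i * m ∧ q = 2 ^ j * l ∧
    ((m = 1 ∧ l = 1 ∧ j < i) ∨ (1 < m ∧ l = 1) ∨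
      (1 < m ∧ 1 < l ∧ (i < j ∨ (i = j ∧ m < l))))

/-- The core of a subset of the cylinder. -/
def core (M : Set Cyl) : Set Cyl :=
  ⋂ (G : Set S1) (_ : G ∈ residual S1), closure (M ∩ Prod.fst ⁻¹' G)

/-- A band is a strip equal to its core. -/
def IsBand (A : Set Cyl) : Prop := IsStrip A ∧ core A = A

/-- Continuity points of a real-valued function on the circle. -/
def contPts (g : S1 → ℝ) : Set S1 := {θ | ContinuousAt g θ}

/-- The top cover `A⁺` of a strip: the closure of the graph of `M_A` restricted to its
residual set of continuity points. -/
def topCover (A : Set Cyl) : Set Cyl :=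
  closure {p : Cyl | p.1 ∈ contPts (MA A) ∧ (p.2 : ℝ) = MA A p.1}

/-- The bottom cover `A⁻` of a strip. -/
def botCover (A : Set Cyl) : Set Cyl :=
  closure {p : Cyl | p.1 ∈ contPts (mA A) ∧ (p.2 : ℝ) = mA A p.1}

/-- `A` positively `F`-covers `B`. -/
def FCoversPos (F : Cyl → Cyl) (A B : Set Cyl) : Prop :=
  stripLE (F '' botCover A) (botCover B) ∧ stripLE (topCover B) (F '' topCover A)

/-- `A` negatively `F`-covers `B`. -/
def FCoversNeg (F : Cyl → Cyl) (A B : Set Cyl) : Prop :=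
  stripLE (topCover B) (F '' botCover A) ∧ stripLE (F '' topCover A) (botCover B)

/-- `A` `F`-covers `B`. -/
def FCovers (F : Cyl → Cyl) (A B : Set Cyl) : Prop := FCoversPos F A B ∨ FCoversNeg F A B

/-- An `s`-horseshoe `(J, D)` for `F`. -/
def IsHorseshoe (F : Cyl → Cyl) (s : ℕ) (J : Set Cyl) (D : Finset (Set Cyl)) : Prop :=
  2 ≤ s ∧ D.card = s ∧ IsBand J ∧
    (∀ L ∈ D, IsBand L ∧ (interior L).Nonempty ∧ FCovers F L J) ∧
    (∀ L ∈ D, ∀ L' ∈ D, L ≠ L' → StripWeaklyOrdered L L')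

/-- Topological entropy (cover entropy of the whole space). -/
def hTop {X : Type} [UniformSpace X] (F : X → X) : EReal := coverEntropy F Set.univ

/-- A pseudo-curve: the closure of the graph of a continuous map from a residual
subset of the circle to the interval. -/
def IsPseudoCurve (A : Set Cyl) : Prop :=
  ∃ G ∈ residual S1, ∃ φ : S1 → II, Continuous (G.restrict φ) ∧
    A = closure {p : Cyl | p.1 ∈ G ∧ p.2 = φ p.1}

/-- The band `E_{AB}` between two pseudo-curves `A < B`. -/
def bandBetween (A B : Set Cyl) : Set Cyl :=
  closure {p : Cyl | p.1 ∈ contPts (MA A) ∧ p.1 ∈ contPts (mA B) ∧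
    MA A p.1 < (p.2 : ℝ) ∧ (p.2 : ℝ) < mA B p.1}

/-- `f` is affine on the subinterval `[a, b]` of `I`. -/
def AffineOnIcc (f : II → II) (a b : II) : Prop :=
  ∀ x : II, a ≤ x → x ≤ b →
    ((b : ℝ) - (a : ℝ)) * ((f x : ℝ) - (f a : ℝ)) =
      ((x : ℝ) - (a : ℝ)) * ((f b : ℝ) - (f a : ℝ))

/-- `f` is the `P`-linear (connect-the-dots) map over the points `p 0 < p 1 < … < p n`:
continuous, affine on each `[p i, p (i+1)]` and constant on both components of
`I ∖ [p 0, p n]`. -/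
def IsPLinear {n : ℕ} (f : II → II) (p : Fin (n + 1) → II) : Prop :=
  Continuous f ∧
    (∀ k : Fin n, AffineOnIcc f (p k.castSucc) (p k.succ)) ∧
    (∀ x : II, x ≤ p 0 → f x = f (p 0)) ∧
    (∀ x : II, p (Fin.last n) ≤ x → f x = f (p (Fin.last n)))

/-- Signed arrow between basic intervals `J_k = [p k, p (k+1)]` and `J_l` in the
`P`-signed Markov graph of `f` (`true` = positive covering, `false` = negative). -/
def IArrow {n : ℕ} (f : II → II) (p : Fin (n + 1) → II) (s : Bool) (k l : Fin n) : Prop :=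
  if s then
    (f (p k.castSucc) : ℝ) ≤ (p l.castSucc : ℝ) ∧ (p l.succ : ℝ) ≤ (f (p k.succ) : ℝ)
  else
    (f (p k.succ) : ℝ) ≤ (p l.castSucc : ℝ) ∧ (p l.succ : ℝ) ≤ (f (p k.castSucc) : ℝ)

/-- A loop of length `m` in the `P`-signed Markov graph of `f`, encoded as `m`-periodic
sequences of vertices (basic intervals) and signs. -/
def IsILoop {n : ℕ} (f : II → II) (p : Fin (n + 1) → II) (m : ℕ)
    (v : ℕ → Fin n) (s : ℕ → Bool) : Prop :=
  0 < m ∧ (∀ i, v (i + m) = v i) ∧ (∀ i, s (i + m) = s i) ∧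
    ∀ i, IArrow f p (s i) (v i) (v (i + 1))

/-- A periodic point `x` of (exact) period `m` is associated to the loop with vertex
sequence `v` if `f^i(x) ∈ J_{v i}` for all `i`. -/
def IAssocPt {n : ℕ} (f : II → II) (p : Fin (n + 1) → II) (m : ℕ)
    (x : II) (v : ℕ → Fin n) : Prop :=
  f^[m] x = x ∧ (∀ i : ℕ, 0 < i → i < m → f^[i] x ≠ x) ∧
    ∀ i : ℕ, p (v i).castSucc ≤ f^[i] x ∧ f^[i] x ≤ p (v i).succ

/-- The sign (`true` = `+`) of the initial segment of length `k` of a signed path. -/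
def signAt (s : ℕ → Bool) (k : ℕ) : Bool :=
  decide (Even ((Finset.range k).filter (fun i => s i = false)).card)

/-- Lexicographic ordering of (infinite liftings of) signed paths, comparing the vertex
sequences `v` and `w`; at the first difference the comparison is reversed iff the sign
of the common initial segment is negative. -/
def seqLT {n : ℕ} (v : ℕ → Fin n) (s : ℕ → Bool) (w : ℕ → Fin n) : Prop :=
  ∃ k : ℕ, (∀ i < k, v i = w i) ∧ v k ≠ w k ∧ (v k < w k ↔ signAt s k = true)

/-- The shift of a sequence by `i`. -/
def shiftSeq {α : Type} (v : ℕ → α) (i : ℕ) : ℕ → α := fun j => v (i + j)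

/-- A loop of length `m` (given by `m`-periodic sequences) is simple if it is not the
repetition of a shorter loop. -/
def SimpleLoop {α β : Type} (m : ℕ) (v : ℕ → α) (s : ℕ → β) : Prop :=
  ¬ ∃ d : ℕ, 0 < d ∧ d < m ∧ d ∣ m ∧ (∀ i, v (i + d) = v i) ∧ (∀ i, s (i + d) = s i)

/-- The basic bands associated to a (spatially labelled) periodic orbit of strips
`B 0 < B 1 < … < B n`: `I_{B_k B_{k+1}} = E_{(B_k)⁺ (B_{k+1})⁻}`. -/
def basicBand {n : ℕ} (B : Fin (n + 1) → Set Cyl) (k : Fin n) : Set Cyl :=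
  bandBetween (topCover (B k.castSucc)) (botCover (B k.succ))

/-- Signed arrow between bands in a signed Markov graph of `F`. -/
def BArrow (F : Cyl → Cyl) (s : Bool) (A B : Set Cyl) : Prop :=
  if s then FCoversPos F A B else FCoversNeg F A B

/-- A loop of length `m` in the signed Markov graph of `F` over the basic bands of the
periodic orbit of strips `B`. -/
def IsBLoop (F : Cyl → Cyl) {n : ℕ} (B : Fin (n + 1) → Set Cyl) (m : ℕ)
    (v : ℕ → Fin n) (s : ℕ → Bool) : Prop :=
  0 < m ∧ (∀ i, v (i + m) = v i) ∧ (∀ i, s (i + m) = s i) ∧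
    ∀ i, BArrow F (s i) (basicBand B (v i)) (basicBand B (v (i + 1)))

/-- Equality of patterns given as cyclic permutations of possibly different index sets. -/
def PatternEqNat {a b : ℕ} (τ : Equiv.Perm (Fin a)) (ν : Equiv.Perm (Fin b)) : Prop :=
  a = b ∧ ∀ (i : Fin a) (j : Fin b), (i : ℕ) = (j : ℕ) → ((τ i : ℕ) = (ν j : ℕ))

/-- The entropy of a strips pattern: the infimum of the entropies of the maps in `S(Ω)`
exhibiting it. -/
def patternEntropy {n : ℕ} (τ : Equiv.Perm (Fin n)) : EReal :=
  sInf {e : EReal | ∃ F : Cyl → Cyl, IsQPF F ∧ ExhibitsStripPattern F τ ∧ e = hTop F}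

end
section AuxProof

open Filter Topology

/-- Continuity points of an upper semicontinuous real function form a residual set. -/
theorem contPts_mem_residual_of_usc {X : Type*} [TopologicalSpace X] {f : X → ℝ}
    (hf : UpperSemicontinuous f) : {x | ContinuousAt f x} ∈ residual X := by
  have hopen : ∀ r : ℚ, IsOpen {x | f x < (r : ℝ)} := fun r =>
    upperSemicontinuous_iff_isOpen_preimage.1 hf (r : ℝ)
  set U : ℚ × ℚ → Set X := fun p =>
    if (p.1 : ℝ) < (p.2 : ℝ) then
      (closure {x | f x < (p.1 : ℝ)})ᶜ ∪ {x | f x < (p.2 : ℝ)}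
    else Set.univ with hU
  have hres : ∀ p : ℚ × ℚ, U p ∈ residual X := by
    intro p
    by_cases hp : (p.1 : ℝ) < (p.2 : ℝ)
    · rw [hU]; simp only [if_pos hp]
      apply residual_of_dense_open
      · exact isClosed_closure.isOpen_compl.union (hopen p.2)
      · have hN : interior (closure {x | f x < (p.1 : ℝ)} ∩ {x | f x < (p.2 : ℝ)}ᶜ) = ∅ := by
          by_contra h
          obtain ⟨x, hx⟩ := Set.nonempty_iff_ne_empty.2 h
          have hxc : x ∈ closure {x | f x < (p.1 : ℝ)} := (interior_subset hx).1
          obtain ⟨y, hyo, hys⟩ := mem_closure_iff.1 hxc _ isOpen_interior hx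
          exact (interior_subset hyo).2 (lt_trans hys hp)
        have heq : ((closure {x | f x < (p.1 : ℝ)})ᶜ ∪ {x | f x < (p.2 : ℝ)}) =
            (closure {x | f x < (p.1 : ℝ)} ∩ {x | f x < (p.2 : ℝ)}ᶜ)ᶜ := by
          rw [Set.compl_inter, compl_compl]
        rw [heq]
        exact interior_eq_empty_iff_dense_compl.1 hN
    · rw [hU]; simp only [if_neg hp]; exact Filter.univ_mem
  have hmem : (⋂ p, U p) ∈ residual X := countable_iInter_mem.2 hres
  refine Filter.mem_of_superset hmem ?_
  intro x hx
  simp only [Set.mem_iInter] at hx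
  rw [Set.mem_setOf_eq, continuousAt_iff_lower_upperSemicontinuousAt]
  refine ⟨?_, hf x⟩
  intro y hy
  obtain ⟨q, hq1, hq2⟩ := exists_rat_btwn hy
  obtain ⟨r, hr1, hr2⟩ := exists_rat_btwn hq2
  have hx' := hx (q, r)
  rw [hU] at hx'
  simp only [if_pos hr1] at hx'
  rcases hx' with h | h
  · have hnhds : (closure {x | f x < (q : ℝ)})ᶜ ∈ 𝓝 x :=
      isClosed_closure.isOpen_compl.mem_nhds h
    filter_upwards [hnhds] with z hz
    have : ¬ f z < (q : ℝ) := fun hc => hz (subset_closure hc)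
    exact lt_of_lt_of_le hq1 (not_lt.1 this)
  · exact absurd h (not_lt.2 hr2.le)

/-- Continuity points of a lower semicontinuous real function form a residual set. -/
theorem contPts_mem_residual_of_lsc {X : Type*} [TopologicalSpace X] {g : X → ℝ}
    (hg : LowerSemicontinuous g) : {x | ContinuousAt g x} ∈ residual X := by
  have husc : UpperSemicontinuous (fun x => -g x) := by
    intro x y hy
    have h' : -y < g x := by dsimp at hy; linarith
    filter_upwards [hg x (-y) h'] with z hz
    show -g z < y
    linarith
  refine Filter.mem_of_superset (contPts_mem_residual_of_usc husc) ?_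
  intro x hx
  have h2 : ContinuousAt (fun z => -(-g z)) x := (ContinuousAt.neg hx)
  simpa using h2

theorem fiber_image_isCompact {A : Set Cyl} (hA : IsClosed A) (θ : S1) :
    IsCompact (Subtype.val '' fiber A θ) := by
  have h1 : IsClosed (fiber A θ) := hA.preimage (Continuous.prodMk_right θ)
  exact h1.isCompact.image continuous_subtype_val

theorem fiber_image_bddAbove {A : Set Cyl} (θ : S1) :
    BddAbove (Subtype.val '' fiber A θ) := by
  refine ⟨1, ?_⟩
  rintro y ⟨z, _, rfl⟩
  exact z.2.2

theorem fiber_image_bddBelow {A : Set Cyl} (θ : S1) :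
    BddBelow (Subtype.val '' fiber A θ) := by
  refine ⟨0, ?_⟩
  rintro y ⟨z, _, rfl⟩
  exact z.2.1

theorem MA_spec {A : Set Cyl} (hA : IsClosed A) (hne : ∀ θ, (fiber A θ).Nonempty) (θ : S1) :
    ∃ x : II, (θ, x) ∈ A ∧ (x : ℝ) = MA A θ := by
  have hc := fiber_image_isCompact hA θ
  have hne' : (Subtype.val '' fiber A θ).Nonempty := (hne θ).image _
  obtain ⟨x, hx, hx2⟩ := hc.sSup_mem hne'
  exact ⟨x, hx, hx2⟩

theorem mA_spec {A : Set Cyl} (hA : IsClosed A) (hne : ∀ θ, (fiber A θ).Nonempty) (θ : S1) :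
    ∃ x : II, (θ, x) ∈ A ∧ (x : ℝ) = mA A θ := by
  have hc := fiber_image_isCompact hA θ
  have hne' : (Subtype.val '' fiber A θ).Nonempty := (hne θ).image _
  obtain ⟨x, hx, hx2⟩ := hc.sInf_mem hne'
  exact ⟨x, hx, hx2⟩

theorem MA_mem_Icc {A : Set Cyl} (hA : IsClosed A) (hne : ∀ θ, (fiber A θ).Nonempty) (θ : S1) :
    MA A θ ∈ Set.Icc (0 : ℝ) 1 := by
  obtain ⟨x, _, hx⟩ := MA_spec hA hne θ
  rw [← hx]; exact x.2

theorem mA_mem_Icc {A : Set Cyl} (hA : IsClosed A) (hne : ∀ θ, (fiber A θ).Nonempty) (θ : S1) :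
    mA A θ ∈ Set.Icc (0 : ℝ) 1 := by
  obtain ⟨x, _, hx⟩ := mA_spec hA hne θ
  rw [← hx]; exact x.2

theorem le_MA {A : Set Cyl} {θ : S1} {x : II} (hx : (θ, x) ∈ A) : (x : ℝ) ≤ MA A θ :=
  le_csSup (fiber_image_bddAbove θ) ⟨x, hx, rfl⟩

theorem mA_le {A : Set Cyl} {θ : S1} {x : II} (hx : (θ, x) ∈ A) : mA A θ ≤ (x : ℝ) :=
  csInf_le (fiber_image_bddBelow θ) ⟨x, hx, rfl⟩

theorem MA_usc {A : Set Cyl} (hA : IsClosed A) (hne : ∀ θ, (fiber A θ).Nonempty) :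
    UpperSemicontinuous (MA A) := by
  rw [upperSemicontinuous_iff_isOpen_preimage]
  intro y
  have hT : {θ : S1 | y ≤ MA A θ} = Prod.fst '' (A ∩ {p : Cyl | y ≤ (p.2 : ℝ)}) := by
    ext θ
    constructor
    · intro h
      obtain ⟨x, hxA, hx⟩ := MA_spec hA hne θ
      exact ⟨(θ, x), ⟨hxA, by rw [Set.mem_setOf_eq]; rw [show ((θ, x).2 : ℝ) = (x : ℝ) from rfl, hx]; exact h⟩, rfl⟩
    · rintro ⟨⟨θ', x⟩, ⟨hpA, hpy⟩, rfl⟩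
      exact le_trans hpy (le_MA hpA)
  have hclosed : IsClosed {θ : S1 | y ≤ MA A θ} := by
    rw [hT]
    have h1 : IsClosed (A ∩ {p : Cyl | y ≤ (p.2 : ℝ)}) :=
      hA.inter (isClosed_le continuous_const (continuous_subtype_val.comp continuous_snd))
    exact (h1.isCompact.image continuous_fst).isClosed
  have heq : MA A ⁻¹' Set.Iio y = {θ : S1 | y ≤ MA A θ}ᶜ := by
    ext θ; simp [not_le]
  rw [heq]
  exact hclosed.isOpen_compl

theorem mA_lsc {A : Set Cyl} (hA : IsClosed A) (hne : ∀ θ, (fiber A θ).Nonempty) :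
    LowerSemicontinuous (mA A) := by
  rw [lowerSemicontinuous_iff_isOpen_preimage]
  intro y
  have hT : {θ : S1 | mA A θ ≤ y} = Prod.fst '' (A ∩ {p : Cyl | (p.2 : ℝ) ≤ y}) := by
    ext θ
    constructor
    · intro h
      obtain ⟨x, hxA, hx⟩ := mA_spec hA hne θ
      exact ⟨(θ, x), ⟨hxA, by rw [Set.mem_setOf_eq]; rw [show ((θ, x).2 : ℝ) = (x : ℝ) from rfl, hx]; exact h⟩, rfl⟩
    · rintro ⟨⟨θ', x⟩, ⟨hpA, hpy⟩, rfl⟩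
      exact le_trans (mA_le hpA) hpy
  have hclosed : IsClosed {θ : S1 | mA A θ ≤ y} := by
    rw [hT]
    have h1 : IsClosed (A ∩ {p : Cyl | (p.2 : ℝ) ≤ y}) :=
      hA.inter (isClosed_le (continuous_subtype_val.comp continuous_snd) continuous_const)
    exact (h1.isCompact.image continuous_fst).isClosed
  have heq : mA A ⁻¹' Set.Ioi y = {θ : S1 | mA A θ ≤ y}ᶜ := by
    ext θ; simp [not_le]
  rw [heq]
  exact hclosed.isOpen_compl

theorem pc_isClosed {A : Set Cyl} (hA : IsPseudoCurve A) : IsClosed A := by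
  obtain ⟨G, hG, φ, hφ, rfl⟩ := hA
  exact isClosed_closure

theorem pc_fiber_ne {A : Set Cyl} (hA : IsPseudoCurve A) (θ : S1) : (fiber A θ).Nonempty := by
  obtain ⟨G, hG, φ, hφ, rfl⟩ := hA
  have hsub : G ⊆ Prod.fst '' closure {p : Cyl | p.1 ∈ G ∧ p.2 = φ p.1} := by
    intro θ' hθ'
    exact ⟨(θ', φ θ'), subset_closure ⟨hθ', rfl⟩, rfl⟩
  have hclosed : IsClosed (Prod.fst '' closure {p : Cyl | p.1 ∈ G ∧ p.2 = φ p.1}) :=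
    (isClosed_closure.isCompact.image continuous_fst).isClosed
  have hdense : Dense (Prod.fst '' closure {p : Cyl | p.1 ∈ G ∧ p.2 = φ p.1}) :=
    (dense_of_mem_residual hG).mono hsub
  have huniv : Prod.fst '' closure {p : Cyl | p.1 ∈ G ∧ p.2 = φ p.1} = Set.univ := by
    rw [← hclosed.closure_eq]; exact hdense.closure_eq
  have hθ : θ ∈ Prod.fst '' closure {p : Cyl | p.1 ∈ G ∧ p.2 = φ p.1} := by
    rw [huniv]; trivial
  obtain ⟨⟨θ', x⟩, hp, rfl⟩ := hθ
  exact ⟨x, hp⟩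

theorem mem_closure_band_bound {f g : S1 → ℝ} {θ : S1} {x : II}
    (hf : ContinuousAt f θ) (hg : ContinuousAt g θ)
    (h : (θ, x) ∈ closure {p : Cyl | p.1 ∈ contPts f ∧ p.1 ∈ contPts g ∧
      f p.1 < (p.2 : ℝ) ∧ (p.2 : ℝ) < g p.1}) :
    f θ ≤ (x : ℝ) ∧ (x : ℝ) ≤ g θ := by
  set S := {p : Cyl | p.1 ∈ contPts f ∧ p.1 ∈ contPts g ∧
      f p.1 < (p.2 : ℝ) ∧ (p.2 : ℝ) < g p.1} with hS
  rw [mem_closure_iff_clusterPt] at h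
  haveI : (𝓝 (θ, x) ⊓ 𝓟 S).NeBot := h
  have h1 : Tendsto (fun p : Cyl => f p.1) (𝓝 (θ, x) ⊓ 𝓟 S) (𝓝 (f θ)) :=
    (hf.comp continuousAt_fst).mono_left inf_le_left
  have h2 : Tendsto (fun p : Cyl => g p.1) (𝓝 (θ, x) ⊓ 𝓟 S) (𝓝 (g θ)) :=
    (hg.comp continuousAt_fst).mono_left inf_le_left
  have h3 : Tendsto (fun p : Cyl => (p.2 : ℝ)) (𝓝 (θ, x) ⊓ 𝓟 S) (𝓝 (x : ℝ)) :=
    ((continuous_subtype_val.comp continuous_snd).continuousAt).mono_left inf_le_left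
  have hev1 : ∀ᶠ p : Cyl in 𝓝 (θ, x) ⊓ 𝓟 S, f p.1 ≤ (p.2 : ℝ) :=
    Filter.eventually_of_mem (Filter.mem_inf_of_right (Filter.mem_principal_self S))
      (fun p hp => hp.2.2.1.le)
  have hev2 : ∀ᶠ p : Cyl in 𝓝 (θ, x) ⊓ 𝓟 S, (p.2 : ℝ) ≤ g p.1 :=
    Filter.eventually_of_mem (Filter.mem_inf_of_right (Filter.mem_principal_self S))
      (fun p hp => hp.2.2.2.le)
  exact ⟨le_of_tendsto_of_tendsto h1 h3 hev1, le_of_tendsto_of_tendsto h3 h2 hev2⟩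

theorem band_gen_subset_closure {f g : S1 → ℝ} {D : Set S1} (hD : Dense D)
    (hDsub : D ⊆ contPts f ∩ contPts g) :
    {p : Cyl | p.1 ∈ contPts f ∧ p.1 ∈ contPts g ∧ f p.1 < (p.2 : ℝ) ∧ (p.2 : ℝ) < g p.1} ⊆
      closure ({p : Cyl | p.1 ∈ contPts f ∧ p.1 ∈ contPts g ∧ f p.1 < (p.2 : ℝ) ∧
        (p.2 : ℝ) < g p.1} ∩ Prod.fst ⁻¹' D) := by
  rintro ⟨θ, x⟩ ⟨hf, hg, h1, h2⟩
  rw [mem_closure_iff_nhds]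
  intro V hV
  rw [mem_nhds_prod_iff] at hV
  obtain ⟨U, hU, W, hW, hUW⟩ := hV
  have hev1 : ∀ᶠ θ' in 𝓝 θ, f θ' < (x : ℝ) := Filter.Tendsto.eventually_lt_const h1 hf
  have hev2 : ∀ᶠ θ' in 𝓝 θ, (x : ℝ) < g θ' := Filter.Tendsto.eventually_const_lt h2 hg
  have hU' : U ∩ ({θ' | f θ' < (x : ℝ)} ∩ {θ' | (x : ℝ) < g θ'}) ∈ 𝓝 θ :=
    Filter.inter_mem hU (Filter.inter_mem hev1 hev2)
  obtain ⟨θ', hθ'D, hθ'U⟩ := hD.exists_mem_open isOpen_interior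
    ⟨θ, mem_interior_iff_mem_nhds.2 hU'⟩
  have hθ'' := interior_subset hθ'U
  refine ⟨(θ', x), hUW (Set.mk_mem_prod hθ''.1 (mem_of_mem_nhds hW)),
    ⟨⟨(hDsub hθ'D).1, (hDsub hθ'D).2, hθ''.2.1, hθ''.2.2⟩, hθ'D⟩⟩

end AuxProof

/-- the band `E_{AB}` between pseudo-curves `A < B` is a band. -/
theorem bandBetween_isBand (A B : Set Cyl)
    (hA : IsPseudoCurve A) (hB : IsPseudoCurve B) (hAB : stripLT A B) :
    IsStrip (bandBetween A B) ∧ core (bandBetween A B) = bandBetween A B := by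
  have hAcl := pc_isClosed hA
  have hBcl := pc_isClosed hB
  have hAne := pc_fiber_ne hA
  have hBne := pc_fiber_ne hB
  set f : S1 → ℝ := MA A with hfdef
  set g : S1 → ℝ := mA B with hgdef
  have hfusc : UpperSemicontinuous f := MA_usc hAcl hAne
  have hglsc : LowerSemicontinuous g := mA_lsc hBcl hBne
  have hf01 : ∀ θ, f θ ∈ Set.Icc (0 : ℝ) 1 := MA_mem_Icc hAcl hAne
  have hg01 : ∀ θ, g θ ∈ Set.Icc (0 : ℝ) 1 := mA_mem_Icc hBcl hBne
  obtain ⟨G1, hG1, hlt⟩ := hAB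
  set G₀ : Set S1 := G1 ∩ (contPts f ∩ contPts g) with hG₀def
  have hG₀ : G₀ ∈ residual S1 :=
    Filter.inter_mem hG1 (Filter.inter_mem (contPts_mem_residual_of_usc hfusc)
      (contPts_mem_residual_of_lsc hglsc))
  set S : Set Cyl := {p : Cyl | p.1 ∈ contPts f ∧ p.1 ∈ contPts g ∧
    f p.1 < (p.2 : ℝ) ∧ (p.2 : ℝ) < g p.1} with hSdef
  have hE : bandBetween A B = closure S := rfl
  have hEcl : IsClosed (bandBetween A B) := by rw [hE]; exact isClosed_closure
  have hcomp : IsCompact (bandBetween A B) := hEcl.isCompact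
  have hmid : ∀ θ ∈ G₀, ∃ x : II, (θ, x) ∈ S := by
    intro θ hθ
    have h1 : f θ < g θ := hlt θ hθ.1
    have hx0 : (0 : ℝ) ≤ (f θ + g θ) / 2 := by
      have := (hf01 θ).1; have := (hg01 θ).1; linarith
    have hx1 : (f θ + g θ) / 2 ≤ 1 := by
      have := (hf01 θ).2; have := (hg01 θ).2; linarith
    refine ⟨⟨(f θ + g θ) / 2, hx0, hx1⟩, hθ.2.1, hθ.2.2, ?_, ?_⟩
    · show f θ < (f θ + g θ) / 2; linarith
    · show (f θ + g θ) / 2 < g θ; linarith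
  have hproj : ∀ θ : S1, ∃ x : II, (θ, x) ∈ bandBetween A B := by
    have hclosed : IsClosed (Prod.fst '' bandBetween A B) :=
      (hcomp.image continuous_fst).isClosed
    have hsub : G₀ ⊆ Prod.fst '' bandBetween A B := by
      intro θ hθ
      obtain ⟨x, hx⟩ := hmid θ hθ
      exact ⟨(θ, x), by rw [hE]; exact subset_closure hx, rfl⟩
    have hdense : Dense (Prod.fst '' bandBetween A B) :=
      (dense_of_mem_residual hG₀).mono hsub
    intro θ
    have huniv : Prod.fst '' bandBetween A B = Set.univ := by
      rw [← hclosed.closure_eq]; exact hdense.closure_eq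
    have hθ : θ ∈ Prod.fst '' bandBetween A B := by rw [huniv]; trivial
    obtain ⟨⟨θ', x⟩, hp, rfl⟩ := hθ
    exact ⟨x, hp⟩
  have hIcc : ∀ θ ∈ G₀, ∃ a b : II, a ≤ b ∧
      fiber (bandBetween A B) θ = Set.Icc a b := by
    intro θ hθ
    have hfg : f θ < g θ := hlt θ hθ.1
    refine ⟨⟨f θ, hf01 θ⟩, ⟨g θ, hg01 θ⟩, Subtype.coe_le_coe.1 hfg.le, ?_⟩
    ext x
    constructor
    · intro hx
      have hx' : (θ, x) ∈ closure S := by rw [← hE]; exact hx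
      have hb := mem_closure_band_bound hθ.2.1 hθ.2.2 hx'
      exact ⟨Subtype.coe_le_coe.1 hb.1, Subtype.coe_le_coe.1 hb.2⟩
    · intro hx
      have hx1 : f θ ≤ (x : ℝ) := Subtype.coe_le_coe.2 hx.1
      have hx2 : (x : ℝ) ≤ g θ := Subtype.coe_le_coe.2 hx.2
      show (θ, x) ∈ bandBetween A B
      rw [hE, mem_closure_iff_nhds]
      intro V hV
      rw [mem_nhds_prod_iff] at hV
      obtain ⟨U, hU, W, hW, hUW⟩ := hV
      rw [nhds_subtype] at hW
      obtain ⟨W', hW', hWsub⟩ := Filter.mem_comap.1 hW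
      have hxcl : (x : ℝ) ∈ closure (Set.Ioo (f θ) (g θ)) := by
        rw [closure_Ioo hfg.ne]; exact ⟨hx1, hx2⟩
      obtain ⟨y, hyW, hy⟩ := mem_closure_iff_nhds.1 hxcl W' hW'
      have hy0 : (0 : ℝ) ≤ y := le_trans (hf01 θ).1 hy.1.le
      have hy1 : y ≤ 1 := le_trans hy.2.le (hg01 θ).2
      exact ⟨(θ, ⟨y, hy0, hy1⟩),
        hUW (Set.mk_mem_prod (mem_of_mem_nhds hU) (hWsub hyW)),
        hθ.2.1, hθ.2.2, hy.1, hy.2⟩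
  constructor
  · exact ⟨hEcl, hproj, G₀, hG₀, hIcc⟩
  · apply Set.Subset.antisymm
    · intro p hp
      have h1 := Set.mem_iInter.1 hp Set.univ
      have h2 := Set.mem_iInter.1 h1 Filter.univ_mem
      simpa [hEcl.closure_eq] using h2
    · intro p hp
      refine Set.mem_iInter.2 fun G => Set.mem_iInter.2 fun hG => ?_
      have hD : Dense (G ∩ G₀) := dense_of_mem_residual (Filter.inter_mem hG hG₀)
      have hDsub : G ∩ G₀ ⊆ contPts f ∩ contPts g := fun θ hθ => hθ.2.2
      have hkey : S ⊆ closure (bandBetween A B ∩ Prod.fst ⁻¹' G) := by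
        intro q hq
        have h3 := band_gen_subset_closure hD hDsub hq
        refine closure_mono ?_ h3
        rintro r ⟨hrS, hrD⟩
        exact ⟨by rw [hE]; exact subset_closure hrS, hrD.1⟩
      have h4 : bandBetween A B ⊆ closure (bandBetween A B ∩ Prod.fst ⁻¹' G) := by
        rw [hE]; exact closure_minimal hkey isClosed_closure
      exact h4 hp
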